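/- (Corollary 1) Suppose the tolerance sequence is η_k = σ/k² for all k ≥ 1 with σ > 0. Let x* be an optimal solution of the primal problem and assume strong duality d(λ*) = F(x*). Then there exist constants C₁, C₂, C₃ > 0 (independent of k) such that for all k ≥ 1: δ_k ≤ C₁/k, ‖Ax^{k+1} − b‖² ≤ C₂/k, and |F(x^{k+1}) − F(x*)| ≤ C₃/√k. -/

import Mathlib

/-!
The multiplier update is an inexact proximal step on the concave dual function `d`. Write
`ℓ(x, λ) = F(x) + ⟪λ, Ax - b⟫` and `r = A x^{k+1} - b`. Convexity of `f` turns the approximate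
optimality of `x^{k+1}` into `ℓ(x^{k+1}, λ^{k+1}) ≤ ℓ(y, λ^{k+1}) + η_k` for all `y`; since
`L_β ≥ ℓ`, this gives `d(λ^{k+1}) ≥ ℓ(x^{k+1}, λ^{k+1}) - η_k`, while `d(μ) ≤ L_β(x^{k+1}; μ)`.
Hence for every `μ`
`d(μ) ≤ d(λ^{k+1}) + η_k + ⟪μ - λ^{k+1}, r⟫ + β/2 ‖r‖²`.
Taking `μ = λ^k` gives the descent `δ_{k+1} + β/2 ‖r‖² ≤ δ_k + η_k`, and taking `μ = λ*` gives
`δ_{k+1} ≤ η_k + (‖λ* - λ^k‖² - ‖λ* - λ^{k+1}‖²) / (2β)`. Summing the latter over the second half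
`k/2 ≤ j < k` only, where the descent keeps `δ` almost nonincreasing and the tail of `∑ σ/j²` is
`O(1/k)`, yields `δ_k = O(1/k)`; the descent then bounds `‖r‖² = O(1/k)`. The multipliers stay
bounded, so the sandwich `-⟪λ*, r⟫ - β/2 ‖r‖² ≤ F(x^{k+1}) - F(x*) ≤ η_k - ⟪λ^{k+1}, r⟫` bounds the
objective gap by `O(‖r‖) = O(1/√k)`.
-/

open RealInnerProductSpace Set

section Optimization

variable {E H : Type*} [NormedAddCommGroup E] [InnerProductSpace ℝ E]
  [NormedAddCommGroup H] [InnerProductSpace ℝ H]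

theorem ConvexOn.add_inner_gradient_le [CompleteSpace E] {s : Set E} {f : E → ℝ} {f' u v : E}
    (hf : ConvexOn ℝ s f) (hu : u ∈ s) (hv : v ∈ s) (hfu : HasGradientAt f f' u) :
    f u + ⟪f', v - u⟫ ≤ f v := by
  set φ : ℝ → ℝ := f ∘ AffineMap.lineMap u v
  have hφ : ConvexOn ℝ (AffineMap.lineMap u v ⁻¹' s) φ := hf.comp_affineMap _
  have hderiv : HasDerivAt φ ⟪f', v - u⟫ 0 := by
    simpa using hfu.hasFDerivAt.comp_hasDerivAt_of_eq (0 : ℝ) AffineMap.hasDerivAt_lineMap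
      (AffineMap.lineMap_apply_zero u v).symm
  have hslope := hφ.le_slope_of_hasDerivAt (by simpa using hu) (by simpa using hv) one_pos hderiv
  simp only [slope_def_field, φ, Function.comp_apply, AffineMap.lineMap_apply_one,
    AffineMap.lineMap_apply_zero, sub_zero, div_one] at hslope
  linarith

noncomputable def lagrangian (f g : E → ℝ) (A : E →L[ℝ] H) (b : H) (x : E) (lam : H) : ℝ :=
  f x + g x + ⟪lam, A x - b⟫

noncomputable def augLagrangian (f g : E → ℝ) (A : E →L[ℝ] H) (b : H) (β : ℝ) (x : E)
    (lam : H) : ℝ :=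
  f x + ⟪lam, A x - b⟫ + β / 2 * ‖A x - b‖ ^ 2 + g x

variable {f g : E → ℝ} {A : E →L[ℝ] H} {b : H} {β η : ℝ} {d : H → ℝ}

theorem lagrangian_le_of_approx [CompleteSpace E] [CompleteSpace H] {x v : E} {ν : H}
    (hf : ConvexOn ℝ univ f) (hfx : HasGradientAt f v x)
    (happ : ∀ y, ⟪v + A.adjoint ν, x - y⟫ + g x - g y ≤ η) (y : E) :
    lagrangian f g A b x ν ≤ lagrangian f g A b y ν + η := by
  have hgrad := hf.add_inner_gradient_le (mem_univ x) (mem_univ y) hfx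
  have hsplit : ⟪v + A.adjoint ν, x - y⟫ = -⟪v, y - x⟫ + (⟪ν, A x - b⟫ - ⟪ν, A y - b⟫) := by
    rw [inner_add_left, ContinuousLinearMap.adjoint_inner_left, ← inner_sub_right,
      ← inner_neg_right, neg_sub, map_sub, sub_sub_sub_cancel_right]
  rw [lagrangian, lagrangian]
  linarith [happ y]

theorem dual_le_of_lagrangian_le {x : E} {ν : H} (hβ : 0 ≤ β)
    (hd : ∀ μ, IsLeast (range (augLagrangian f g A b β · μ)) (d μ))
    (hx : ∀ y, lagrangian f g A b x ν ≤ lagrangian f g A b y ν + η) (μ : H) :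
    d μ ≤ d ν + η + ⟪μ - ν, A x - b⟫ + β / 2 * ‖A x - b‖ ^ 2 := by
  obtain ⟨y, hy⟩ := (hd ν).1
  have hdμ : d μ ≤ augLagrangian f g A b β x μ := (hd μ).2 ⟨x, rfl⟩
  have hpen : 0 ≤ β / 2 * ‖A y - b‖ ^ 2 := by positivity
  have hxy := hx y
  simp only [augLagrangian, lagrangian] at hy hdμ hxy
  linarith [inner_sub_left (𝕜 := ℝ) μ ν (A x - b)]

theorem dual_add_le_of_lagrangian_le {x : E} {lam : H} (hβ : 0 ≤ β)
    (hd : ∀ μ, IsLeast (range (augLagrangian f g A b β · μ)) (d μ))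
    (hx : ∀ y, lagrangian f g A b x (lam + β • (A x - b))
      ≤ lagrangian f g A b y (lam + β • (A x - b)) + η) :
    d lam + β / 2 * ‖A x - b‖ ^ 2 ≤ d (lam + β • (A x - b)) + η := by
  have h := dual_le_of_lagrangian_le hβ hd hx lam
  rw [sub_add_cancel_left, inner_neg_left, real_inner_smul_left, real_inner_self_eq_norm_sq] at h
  linarith

theorem two_mul_inner_add_norm_sq_eq (β : ℝ) (p lam r : H) :
    2 * β * (⟪p - (lam + β • r), r⟫ + β / 2 * ‖r‖ ^ 2)
      = ‖p - lam‖ ^ 2 - ‖p - (lam + β • r)‖ ^ 2 := by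
  have hsplit : p - lam = (p - (lam + β • r)) + β • r := by abel
  rw [hsplit, norm_add_sq_real, real_inner_smul_right, norm_smul, Real.norm_eq_abs, mul_pow,
    sq_abs]
  ring

theorem dual_sub_le_of_lagrangian_le {x : E} {lam : H} (hβ : 0 < β)
    (hd : ∀ μ, IsLeast (range (augLagrangian f g A b β · μ)) (d μ))
    (hx : ∀ y, lagrangian f g A b x (lam + β • (A x - b))
      ≤ lagrangian f g A b y (lam + β • (A x - b)) + η) (p : H) :
    d p - d (lam + β • (A x - b))
      ≤ η + (‖p - lam‖ ^ 2 / (2 * β) - ‖p - (lam + β • (A x - b))‖ ^ 2 / (2 * β)) := by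
  have h := dual_le_of_lagrangian_le hβ.le hd hx p
  rw [← sub_div, ← two_mul_inner_add_norm_sq_eq, mul_div_cancel_left₀ _ (by positivity)]
  linarith

theorem abs_sub_le_of_lagrangian_le {x xstar : E} {ν p : H} {M : ℝ} (hβ : 0 ≤ β)
    (hd : ∀ μ, IsLeast (range (augLagrangian f g A b β · μ)) (d μ))
    (hx : ∀ y, lagrangian f g A b x ν ≤ lagrangian f g A b y ν + η)
    (hfeas : A xstar = b) (hsd : d p = f xstar + g xstar) (hν : ‖ν‖ ≤ M) (hp : ‖p‖ ≤ M) :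
    |f x + g x - (f xstar + g xstar)| ≤ η + M * ‖A x - b‖ + β / 2 * ‖A x - b‖ ^ 2 := by
  have hη : 0 ≤ η := by linarith [hx x]
  have hup := hx xstar
  simp only [lagrangian] at hup
  rw [hfeas, sub_self, inner_zero_right] at hup
  have hlow : d p ≤ augLagrangian f g A b β x p := (hd p).2 ⟨x, rfl⟩
  rw [augLagrangian, hsd] at hlow
  have hr := norm_nonneg (A x - b)
  have hpen : 0 ≤ β / 2 * ‖A x - b‖ ^ 2 := by positivity
  rw [abs_le]
  constructor
  · linarith [real_inner_le_norm p (A x - b), mul_le_mul_of_nonneg_right hp hr]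
  · linarith [neg_le_of_abs_le (abs_real_inner_le_norm ν (A x - b)),
      mul_le_mul_of_nonneg_right hν hr]

end Optimization

theorem exists_norm_le_of_norm_sub_sq_le {G : Type*} [SeminormedAddCommGroup G] {p : G}
    {u : ℕ → G} {R : ℝ} (h : ∀ k, 1 ≤ k → ‖p - u k‖ ^ 2 ≤ R) :
    ∃ M, 0 ≤ M ∧ ‖p‖ ≤ M ∧ ∀ k, 1 ≤ k → ‖u k‖ ≤ M := by
  refine ⟨‖p‖ + √R, by positivity, le_add_of_nonneg_right (Real.sqrt_nonneg _), fun k hk => ?_⟩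
  linarith [norm_le_norm_add_norm_sub' (u k) p, norm_sub_rev p (u k),
    Real.le_sqrt_of_sq_le (h k hk)]

theorem div_sq_le_sub_div {s k : ℝ} (hs : 0 ≤ s) (hk : 1 ≤ k) :
    s / k ^ 2 ≤ 2 * s / k - 2 * s / (k + 1) := by
  have hsub : 2 * s / k - 2 * s / (k + 1) = 2 * s / (k * (k + 1)) := by
    field_simp
    ring
  rw [hsub, div_le_div_iff₀ (by positivity) (by positivity)]
  nlinarith [mul_nonneg hs (by nlinarith : (0 : ℝ) ≤ k ^ 2 - k)]

section Sequences

variable {u δ a : ℕ → ℝ} {σ : ℝ}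

theorem le_add_of_le_add_div_sq (hσ : 0 ≤ σ)
    (hu : ∀ k, 1 ≤ k → u (k + 1) ≤ u k + σ / (k : ℝ) ^ 2) {k : ℕ} (hk : 1 ≤ k) :
    u k ≤ u 1 + 2 * σ := by
  suffices u k + 2 * σ / k ≤ u 1 + 2 * σ by
    have : 0 ≤ 2 * σ / k := by positivity
    linarith
  induction k, hk using Nat.le_induction with
  | base => norm_num
  | succ k hk ih =>
    have hk' : (1 : ℝ) ≤ k := by exact_mod_cast hk
    push_cast
    linarith [hu k hk, div_sq_le_sub_div hσ hk']

/-- `2 m σ / (m + j)` is a potential absorbing the weighted errors `(j + 1) σ / (m + j)²`,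
which is possible as long as `j ≤ m`. -/
theorem mul_le_of_descent (hσ : 0 ≤ σ)
    (hdesc : ∀ k, 1 ≤ k → δ (k + 1) ≤ δ k + σ / (k : ℝ) ^ 2)
    (htel : ∀ k, 1 ≤ k → δ (k + 1) ≤ σ / (k : ℝ) ^ 2 + (a k - a (k + 1)))
    {m : ℕ} (hm : 1 ≤ m) {j : ℕ} (hj : j ≤ m) :
    j * δ (m + j) + a (m + j) + 2 * m * σ / (m + j : ℕ) ≤ a m + 2 * σ := by
  induction j with
  | zero =>
    have hm0 : (m : ℝ) ≠ 0 := by positivity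
    simp only [Nat.cast_zero, zero_mul, zero_add, add_zero]
    rw [mul_comm 2 (m : ℝ), mul_assoc, mul_div_cancel_left₀ _ hm0]
  | succ j ih =>
    have hk : (1 : ℝ) ≤ (m + j : ℕ) := by exact_mod_cast (by omega : 1 ≤ m + j)
    have hjm : (j : ℝ) + 1 ≤ m := by exact_mod_cast hj
    have hnear := mul_le_mul_of_nonneg_left (hdesc (m + j) (by omega)) j.cast_nonneg
    have hweight :
        ((j : ℝ) + 1) * (σ / ((m + j : ℕ) : ℝ) ^ 2) ≤ m * σ / ((m + j : ℕ) : ℝ) ^ 2 := by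
      rw [← mul_div_assoc]
      gcongr
    have hpot := div_sq_le_sub_div (mul_nonneg (m.cast_nonneg (α := ℝ)) hσ) hk
    have htel' := htel (m + j) (by omega)
    have ih' := ih (by omega)
    rw [← add_assoc]
    push_cast at hnear hweight hpot htel' ih' ⊢
    linear_combination hnear + htel' + hweight + hpot + ih'

theorem exists_le_div_of_descent (hσ : 0 < σ) (hδ : ∀ k, 0 ≤ δ k) (ha : ∀ k, 0 ≤ a k)
    (hdesc : ∀ k, 1 ≤ k → δ (k + 1) ≤ δ k + σ / (k : ℝ) ^ 2)
    (htel : ∀ k, 1 ≤ k → δ (k + 1) ≤ σ / (k : ℝ) ^ 2 + (a k - a (k + 1))) :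
    ∃ C, 0 < C ∧ ∀ k, 1 ≤ k → δ k ≤ C / k := by
  have hbound : ∀ k, 1 ≤ k → a k ≤ a 1 + 2 * σ := fun k hk =>
    le_add_of_le_add_div_sq hσ.le (fun k hk => by linarith [htel k hk, hδ (k + 1)]) hk
  refine ⟨3 * (a 1 + 4 * σ) + δ 1, by linarith [ha 1, hδ 1], fun k hk => ?_⟩
  rw [le_div_iff₀ (by exact_mod_cast hk)]
  rcases hk.eq_or_lt with rfl | hk2
  · rw [Nat.cast_one, mul_one]
    linarith [ha 1]
  obtain ⟨m, j, rfl, hjm, hm, h3j⟩ : ∃ m j, k = m + j ∧ j ≤ m ∧ 1 ≤ m ∧ m + j ≤ 3 * j :=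
    ⟨k - k / 2, k / 2, by omega, by omega, by omega, by omega⟩
  have hpot : 0 ≤ 2 * m * σ / (m + j : ℕ) := by positivity
  have hjδ : j * δ (m + j) ≤ a 1 + 4 * σ := by
    linarith [mul_le_of_descent hσ.le hdesc htel hm hjm, hbound m hm, ha (m + j)]
  calc δ (m + j) * (m + j : ℕ) ≤ δ (m + j) * (3 * j) := by
        gcongr
        · exact hδ _
        · exact_mod_cast h3j
    _ ≤ 3 * (a 1 + 4 * σ) + δ 1 := by linarith [hδ 1]

end Sequences

theorem le_div_of_descent {β σ C k t δ δ' : ℝ} (hβ : 0 < β) (hσ : 0 ≤ σ) (hk : 1 ≤ k)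
    (hδ' : 0 ≤ δ') (hδ : δ ≤ C / k) (h : δ' + β / 2 * t ≤ δ + σ / k ^ 2) :
    t ≤ 2 * (C + σ) / β / k := by
  have hσk : σ / k ^ 2 ≤ σ / k := div_le_div_of_nonneg_left hσ (by positivity) (by nlinarith)
  have hβt : β / 2 * t ≤ (C + σ) / k := by rw [add_div]; linarith
  rw [div_div, le_div_iff₀ (by positivity)]
  rw [le_div_iff₀ (by positivity)] at hβt
  linarith

theorem div_sq_add_mul_add_mul_sq_le_div_sqrt {β σ M C k t : ℝ} (hβ : 0 ≤ β) (hσ : 0 ≤ σ)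
    (hM : 0 ≤ M) (hC : 0 ≤ C) (hk : 1 ≤ k) (htC : t ^ 2 ≤ C / k) :
    σ / k ^ 2 + M * t + β / 2 * t ^ 2 ≤ (σ + M * √C + β * C / 2) / √k := by
  have hs : 1 ≤ √k := Real.one_le_sqrt.mpr hk
  have hsk : √k ≤ k := by nlinarith [Real.sq_sqrt (by linarith : (0 : ℝ) ≤ k)]
  have hts : t ≤ √C / √k := by
    rw [← Real.sqrt_div' _ (by linarith : (0 : ℝ) ≤ k)]
    exact Real.le_sqrt_of_sq_le htC
  have hpen : t ^ 2 ≤ C / √k := htC.trans (div_le_div_of_nonneg_left hC (by positivity) hsk)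
  calc σ / k ^ 2 + M * t + β / 2 * t ^ 2 ≤ σ / √k + M * (√C / √k) + β / 2 * (C / √k) := by
        gcongr
        nlinarith
    _ = (σ + M * √C + β * C / 2) / √k := by ring

theorem ial_corollary_rates_general
    {n m : ℕ}
    (A : EuclideanSpace ℝ (Fin n) →L[ℝ] EuclideanSpace ℝ (Fin m))
    (b : EuclideanSpace ℝ (Fin m))
    (f g : EuclideanSpace ℝ (Fin n) → ℝ)
    (f' : EuclideanSpace ℝ (Fin n) → EuclideanSpace ℝ (Fin n))
    (hf : ConvexOn ℝ Set.univ f)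
    (hf' : ∀ x, HasGradientAt f (f' x) x)
    (β : ℝ) (hβ : 0 < β)
    (L : EuclideanSpace ℝ (Fin n) → EuclideanSpace ℝ (Fin m) → ℝ)
    (hL : ∀ x lam, L x lam
        = f x + ⟪lam, A x - b⟫ + β / 2 * ‖A x - b‖ ^ 2 + g x)
    (d : EuclideanSpace ℝ (Fin m) → ℝ)
    (hd : ∀ lam, IsLeast (Set.range fun x => L x lam) (d lam))
    (x : ℕ → EuclideanSpace ℝ (Fin n))
    (lam : ℕ → EuclideanSpace ℝ (Fin m))
    (σ : ℝ) (hσ : 0 < σ)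
    (η : ℕ → ℝ)
    (hη : ∀ k, 1 ≤ k → η k = σ / (k : ℝ) ^ 2)
    (happrox : ∀ k, 1 ≤ k → ∀ y,
        ⟪f' (x (k + 1)) + A.adjoint (lam k + β • (A (x (k + 1)) - b)), x (k + 1) - y⟫
          + g (x (k + 1)) - g y ≤ η k)
    (hlam : ∀ k, 1 ≤ k → lam (k + 1) = lam k + β • (A (x (k + 1)) - b))
    (lamstar : EuclideanSpace ℝ (Fin m))
    (hstar : ∀ μ, d μ ≤ d lamstar)
    (δ : ℕ → ℝ)
    (hδ : ∀ k, δ k = d lamstar - d (lam k))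
    (F : EuclideanSpace ℝ (Fin n) → ℝ)
    (hF : ∀ y, F y = f y + g y)
    (xstar : EuclideanSpace ℝ (Fin n))
    (hfeas : A xstar = b)
    (hsd : d lamstar = F xstar) :
    ∃ C₁ C₂ C₃ : ℝ, 0 < C₁ ∧ 0 < C₂ ∧ 0 < C₃ ∧
      ∀ k, 1 ≤ k →
        δ k ≤ C₁ / k
          ∧ ‖A (x (k + 1)) - b‖ ^ 2 ≤ C₂ / k
          ∧ |F (x (k + 1)) - F xstar| ≤ C₃ / Real.sqrt k := by
  obtain rfl : L = augLagrangian f g A b β := funext fun y => funext (hL y)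
  have hmin : ∀ k, 1 ≤ k → ∀ y, lagrangian f g A b (x (k + 1)) (lam (k + 1))
      ≤ lagrangian f g A b y (lam (k + 1)) + σ / (k : ℝ) ^ 2 := fun k hk => by
    rw [hlam k hk, ← hη k hk]
    exact lagrangian_le_of_approx hf (hf' _) (happrox k hk)
  have hdesc : ∀ k, 1 ≤ k →
      δ (k + 1) + β / 2 * ‖A (x (k + 1)) - b‖ ^ 2 ≤ δ k + σ / (k : ℝ) ^ 2 := fun k hk => by
    have h := dual_add_le_of_lagrangian_le hβ.le hd (hlam k hk ▸ hmin k hk)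
    rw [hδ, hδ, hlam k hk]
    linarith
  set a : ℕ → ℝ := fun k => ‖lamstar - lam k‖ ^ 2 / (2 * β)
  have htel : ∀ k, 1 ≤ k → δ (k + 1) ≤ σ / (k : ℝ) ^ 2 + (a k - a (k + 1)) := fun k hk => by
    have h := dual_sub_le_of_lagrangian_le hβ hd (hlam k hk ▸ hmin k hk) lamstar
    rw [← hlam k hk, ← hδ] at h
    exact h
  have hδnn : ∀ k, 0 ≤ δ k := fun k => by rw [hδ]; linarith [hstar (lam k)]
  obtain ⟨C₁, hC₁, hδrate⟩ := exists_le_div_of_descent hσ hδnn (fun k => by positivity)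
    (fun k hk => (le_add_of_nonneg_right (by positivity)).trans (hdesc k hk)) htel
  obtain ⟨M, hM, hMstar, hbound⟩ := exists_norm_le_of_norm_sub_sq_le (u := lam) fun k hk =>
    (div_le_iff₀ (by positivity)).1 (le_add_of_le_add_div_sq (u := a) hσ.le
      (fun k hk => by linarith [htel k hk, hδnn (k + 1)]) hk)
  have hfeasrate : ∀ k, 1 ≤ k → ‖A (x (k + 1)) - b‖ ^ 2 ≤ 2 * (C₁ + σ) / β / k := fun k hk =>
    le_div_of_descent hβ hσ.le (by exact_mod_cast hk) (hδnn _) (hδrate k hk) (hdesc k hk)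
  refine ⟨C₁, 2 * (C₁ + σ) / β, σ + M * √(2 * (C₁ + σ) / β) + β * (2 * (C₁ + σ) / β) / 2,
    hC₁, by positivity, by positivity, fun k hk => ⟨hδrate k hk, hfeasrate k hk, ?_⟩⟩
  rw [hF, hF]
  exact (abs_sub_le_of_lagrangian_le hβ.le hd (hmin k hk) hfeas (hsd.trans (hF xstar))
    (hbound (k + 1) (by omega)) hMstar).trans (div_sq_add_mul_add_mul_sq_le_div_sqrt hβ.le hσ.le
      hM (by positivity) (by exact_mod_cast hk) (hfeasrate k hk))

/-- **Corollary 1.**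
Suppose `η_k = σ/k²` for all `k ≥ 1` with `σ > 0`. Let `x*` be an optimal primal
solution and assume strong duality `d(λ*) = F(x*)`. Then there exist constants
`C₁, C₂, C₃ > 0` such that for all `k ≥ 1`: `δ_k ≤ C₁/k`,
`‖Ax^{k+1} − b‖² ≤ C₂/k`, and `|F(x^{k+1}) − F(x*)| ≤ C₃/√k`. -/
theorem ial_corollary_rates
    {n m : ℕ}
    (A : EuclideanSpace ℝ (Fin n) →L[ℝ] EuclideanSpace ℝ (Fin m))
    (b : EuclideanSpace ℝ (Fin m))
    (f g : EuclideanSpace ℝ (Fin n) → ℝ)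
    (f' : EuclideanSpace ℝ (Fin n) → EuclideanSpace ℝ (Fin n))
    (hf : ConvexOn ℝ Set.univ f)
    (hf' : ∀ x, HasGradientAt f (f' x) x)
    (hg : ConvexOn ℝ Set.univ g)
    (β : ℝ) (hβ : 0 < β)
    (L : EuclideanSpace ℝ (Fin n) → EuclideanSpace ℝ (Fin m) → ℝ)
    (hL : ∀ x lam, L x lam
        = f x + ⟪lam, A x - b⟫ + β / 2 * ‖A x - b‖ ^ 2 + g x)
    (d : EuclideanSpace ℝ (Fin m) → ℝ)
    (hd : ∀ lam, IsLeast (Set.range fun x => L x lam) (d lam))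
    (x : ℕ → EuclideanSpace ℝ (Fin n))
    (lam : ℕ → EuclideanSpace ℝ (Fin m))
    (σ : ℝ) (hσ : 0 < σ)
    (η : ℕ → ℝ)
    (hη : ∀ k, 1 ≤ k → η k = σ / (k : ℝ) ^ 2)
    (happrox : ∀ k, 1 ≤ k → ∀ y,
        ⟪f' (x (k + 1)) + A.adjoint (lam k + β • (A (x (k + 1)) - b)), x (k + 1) - y⟫
          + g (x (k + 1)) - g y ≤ η k)
    (hlam : ∀ k, 1 ≤ k → lam (k + 1) = lam k + β • (A (x (k + 1)) - b))
    (lamstar : EuclideanSpace ℝ (Fin m))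
    (hstar : ∀ μ, d μ ≤ d lamstar)
    (δ : ℕ → ℝ)
    (hδ : ∀ k, δ k = d lamstar - d (lam k))
    (F : EuclideanSpace ℝ (Fin n) → ℝ)
    (hF : ∀ y, F y = f y + g y)
    (xstar : EuclideanSpace ℝ (Fin n))
    (hfeas : A xstar = b)
    (hopt : ∀ y, A y = b → F xstar ≤ F y)
    (hsd : d lamstar = F xstar) :
    ∃ C₁ C₂ C₃ : ℝ, 0 < C₁ ∧ 0 < C₂ ∧ 0 < C₃ ∧
      ∀ k, 1 ≤ k →
        δ k ≤ C₁ / k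
          ∧ ‖A (x (k + 1)) - b‖ ^ 2 ≤ C₂ / k
          ∧ |F (x (k + 1)) - F xstar| ≤ C₃ / Real.sqrt k :=
  ial_corollary_rates_general A b f g f' hf hf' β hβ L hL d hd x lam σ hσ η hη happrox hlam lamstar
    hstar δ hδ F hF xstar hfeas hsd
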